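/- arXiv:2201.02839 — 3 statements merged into one kernel-verified Lean document; each statement's English description precedes it below -/
import Mathlib

section
/- For all sufficiently large n ∈ 16ℕ, the Fourier transform 𝓕u₀ is supported in the annulus {ξ ∈ ℝ : (4/3)·2^{n−1} ≤ |ξ| ≤ (3/2)·2^{n−1}}; consequently Δ_{n−1}u₀ = u₀ and Δ_j u₀ = 0 for every j ≥ −1 with j ≠ n−1. -/
open MeasureTheory Real Filter Set ENNReal

noncomputable section

/-- Fourier transform: 𝓕f(ξ) = ∫ e^{-ixξ} f(x) dx. -/
def FT (f : ℝ → ℂ) (ξ : ℝ) : ℂ :=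
  ∫ x : ℝ, Complex.exp (-(Complex.I * x * ξ)) * f x

/-- Inverse Fourier transform: (2π)⁻¹ ∫ e^{ixξ} g(ξ) dξ. -/
def IFT (g : ℝ → ℂ) (x : ℝ) : ℂ :=
  (2 * Real.pi)⁻¹ • ∫ ξ : ℝ, Complex.exp (Complex.I * x * ξ) * g ξ

/-- Littlewood-Paley block Δ_j, j : ℤ (only j ≥ -1 meaningful). -/
def LP (χt : ℝ → ℝ) (j : ℤ) (f : ℝ → ℂ) (x : ℝ) : ℂ :=
  if j = -1 then IFT (fun ξ => (χt ξ : ℂ) * FT f ξ) x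
  else IFT (fun ξ => ((χt ((2:ℝ) ^ (-j) * ξ / 2) - χt ((2:ℝ) ^ (-j) * ξ) : ℝ) : ℂ) * FT f ξ) x

/-- Besov B¹_{p,1} norm. -/
def besov1 (χt : ℝ → ℝ) (p : ℝ≥0∞) (f : ℝ → ℝ) : ℝ≥0∞ :=
  ∑' k : ℕ, (2 : ℝ≥0∞) ^ ((k : ℤ) - 1) *
    eLpNorm (LP χt ((k : ℤ) - 1) (fun x => (f x : ℂ))) p volume

/-- Besov B⁰_{p,1} norm. -/
def besov0 (χt : ℝ → ℝ) (p : ℝ≥0∞) (f : ℝ → ℝ) : ℝ≥0∞ :=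
  ∑' k : ℕ, eLpNorm (LP χt ((k : ℤ) - 1) (fun x => (f x : ℂ))) p volume

def C01norm (f : ℝ → ℝ) : ℝ≥0∞ := eLpNorm f ⊤ volume + eLpNorm (deriv f) ⊤ volume

def W1pnorm (p : ℝ≥0∞) (f : ℝ → ℝ) : ℝ≥0∞ := eLpNorm f p volume + eLpNorm (deriv f) p volume

def gam : ℝ := 17 / 24

def Nset (n : ℕ) : Finset ℕ :=
  (Finset.range (n + 1)).filter fun k => 8 ∣ k ∧ n ≤ 4 * k ∧ 2 * k ≤ n

/-- χ̌, real part of the inverse Fourier transform of the cutoff. -/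
def chk (χ : ℝ → ℝ) (x : ℝ) : ℝ := (IFT (fun ξ => (χ ξ : ℂ)) x).re

def u0 (χ : ℝ → ℝ) (n : ℕ) (x : ℝ) : ℝ :=
  (2:ℝ) ^ (-(n : ℤ)) * (n : ℝ) ^ (-(1:ℝ)/2) * Real.log n *
    ∑ ℓ ∈ Nset n,
      (Real.cos ((x + 2 ^ (ℓ + 1) * gam) * (2 ^ n * gam + 2 ^ ℓ * gam)) +
        Real.cos ((x + 2 ^ (ℓ + 1) * gam) * (2 ^ n * gam - 2 ^ ℓ * gam))) *
        chk χ (x + 2 ^ (ℓ + 1) * gam)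

/-- A smooth cutoff equal to 1 on |ξ|≤1/4 and 0 for |ξ|≥1/2, valued in [0,1]. -/
def IsCutoff (χ : ℝ → ℝ) : Prop :=
  ContDiff ℝ (⊤ : ℕ∞) χ ∧ (∀ ξ, χ ξ ∈ Set.Icc (0:ℝ) 1) ∧
    (∀ ξ, |ξ| ≤ 1/4 → χ ξ = 1) ∧ (∀ ξ, 1/2 ≤ |ξ| → χ ξ = 0)

/-- Littlewood–Paley base cutoff: smooth radial, valued in [0,1], = 1 on |ξ|≤3/4,
supported in |ξ|≤4/3, and φ(ξ) = χ̃(ξ/2) − χ̃(ξ) equals 1 on 4/3 ≤ |ξ| ≤ 3/2. -/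
def IsLPCutoff (χt : ℝ → ℝ) : Prop :=
  ContDiff ℝ (⊤ : ℕ∞) χt ∧ (∀ ξ, χt ξ ∈ Set.Icc (0:ℝ) 1) ∧ (∀ ξ, χt (-ξ) = χt ξ) ∧
    (∀ ξ, |ξ| ≤ 3/4 → χt ξ = 1) ∧ (∀ ξ, 4/3 < |ξ| → χt ξ = 0) ∧
    (∀ ξ, 4/3 ≤ |ξ| → |ξ| ≤ 3/2 → χt (ξ/2) - χt ξ = 1)

/-- Q = (1-∂ₓ²)⁻¹, convolution with ½ e^{-|·|}. -/
def Qop (h : ℝ → ℝ) (x : ℝ) : ℝ := (1/2) * ∫ y : ℝ, Real.exp (-|x - y|) * h y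

/-- P(u) = -∂ₓ(1-∂ₓ²)⁻¹(u² + ½(∂ₓu)²). -/
def Pop (u : ℝ → ℝ → ℝ) (t x : ℝ) : ℝ :=
  -(1/2) * ∫ y : ℝ, Real.sign (x - y) * Real.exp (-|x - y|) *
      ((u t y) ^ 2 + (1/2) * (deriv (u t) y) ^ 2)

/-- u is a C¹ solution of the Camassa–Holm equation on [0,T]×ℝ, Schwartz in space. -/
def IsSolution (T : ℝ) (u : ℝ → ℝ → ℝ) : Prop :=
  ContDiffOn ℝ 1 (fun q : ℝ × ℝ => u q.1 q.2) (Set.Icc 0 T ×ˢ Set.univ) ∧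
  (∀ t ∈ Set.Icc (0:ℝ) T, ∃ g : SchwartzMap ℝ ℝ, ∀ x, u t x = g x) ∧
  (∀ t ∈ Set.Icc (0:ℝ) T, ∀ x : ℝ,
    derivWithin (fun s => u s x) (Set.Icc 0 T) t + u t x * deriv (u t) x = Pop u t x)

namespace S4

lemma cont_exp_lin (y : ℝ) : Continuous fun ξ : ℝ => Complex.exp (Complex.I * y * ξ) := by
  fun_prop

def chiE (χ : ℝ → ℝ) (ξ : ℝ) : ℝ := (χ ξ + χ (-ξ)) / 2

def pF (χ : ℝ → ℝ) (a ω : ℝ) (ξ : ℝ) : ℂ :=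
  Complex.exp (Complex.I * a * ξ) * (((chiE χ (ξ - ω) + chiE χ (ξ + ω)) / 2 : ℝ) : ℂ)

def coefn (n : ℕ) : ℝ := (2:ℝ) ^ (-(n : ℤ)) * (n : ℝ) ^ (-(1:ℝ)/2) * Real.log n

def Gfun (χ : ℝ → ℝ) (n : ℕ) (ξ : ℝ) : ℂ :=
  ((coefn n : ℝ) : ℂ) * ∑ ℓ ∈ Nset n,
    (pF χ ((2:ℝ)^(ℓ+1)*gam) ((2:ℝ)^n*gam + (2:ℝ)^ℓ*gam) ξ +
     pF χ ((2:ℝ)^(ℓ+1)*gam) ((2:ℝ)^n*gam - (2:ℝ)^ℓ*gam) ξ)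

variable {χ : ℝ → ℝ}

lemma chiE_cont (hχ : IsCutoff χ) : Continuous (chiE χ) := by
  have := hχ.1.continuous; unfold chiE; fun_prop

lemma chiE_zero (hχ : IsCutoff χ) {η : ℝ} (h : 1/2 ≤ |η|) : chiE χ η = 0 := by
  have h2 : 1/2 ≤ |(-η)| := by rwa [abs_neg]
  simp [chiE, hχ.2.2.2 η h, hχ.2.2.2 (-η) h2]

lemma integrable_exp_mul {c : ℝ → ℂ} (hc : Continuous c) (hs : HasCompactSupport c) (y : ℝ) :
    Integrable fun ξ : ℝ => Complex.exp (Complex.I * y * ξ) * c ξ :=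
  ((cont_exp_lin y).mul hc).integrable_of_hasCompactSupport hs.mul_left

lemma hcs_chi (hχ : IsCutoff χ) : HasCompactSupport fun ξ : ℝ => ((χ ξ : ℝ) : ℂ) := by
  apply HasCompactSupport.intro (isCompact_Icc (a := -(1/2 : ℝ)) (b := 1/2))
  intro ξ hξ
  rw [Set.mem_Icc, not_and_or, not_le, not_le] at hξ
  have : χ ξ = 0 := by
    apply hχ.2.2.2; rw [le_abs]; rcases hξ with h | h
    · right; linarith
    · left; linarith
  simp [this]

lemma hcs_chineg (hχ : IsCutoff χ) : HasCompactSupport fun ξ : ℝ => ((χ (-ξ) : ℝ) : ℂ) := by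
  apply HasCompactSupport.intro (isCompact_Icc (a := -(1/2 : ℝ)) (b := 1/2))
  intro ξ hξ
  rw [Set.mem_Icc, not_and_or, not_le, not_le] at hξ
  have : χ (-ξ) = 0 := by
    apply hχ.2.2.2; rw [abs_neg, le_abs]; rcases hξ with h | h
    · right; linarith
    · left; linarith
  simp [this]

lemma integral_exp_chiE (hχ : IsCutoff χ) (y : ℝ) :
    (∫ ξ : ℝ, Complex.exp (Complex.I * y * ξ) * ((chiE χ ξ : ℝ) : ℂ))
      = ((2 * π * chk χ y : ℝ) : ℂ) := by
  have hcont : Continuous fun ξ : ℝ => ((χ ξ : ℝ) : ℂ) :=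
    Complex.continuous_ofReal.comp hχ.1.continuous
  have hcont2 : Continuous fun ξ : ℝ => ((χ (-ξ) : ℝ) : ℂ) :=
    hcont.comp continuous_neg
  have hint : Integrable fun ξ : ℝ => Complex.exp (Complex.I * y * ξ) * ((χ ξ : ℝ) : ℂ) :=
    integrable_exp_mul hcont (hcs_chi hχ) y
  have hint2 : Integrable fun ξ : ℝ => Complex.exp (Complex.I * y * ξ) * ((χ (-ξ) : ℝ) : ℂ) :=
    integrable_exp_mul hcont2 (hcs_chineg hχ) y
  set W : ℂ := ∫ ξ : ℝ, Complex.exp (Complex.I * y * ξ) * ((χ ξ : ℝ) : ℂ) with hW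
  have h2 : (∫ ξ : ℝ, Complex.exp (Complex.I * y * ξ) * ((χ (-ξ) : ℝ) : ℂ))
      = (starRingEnd ℂ) W := by
    have e1 : (fun ξ : ℝ => Complex.exp (Complex.I * y * ξ) * ((χ (-ξ) : ℝ) : ℂ))
        = fun ξ : ℝ =>
          (fun t : ℝ => (starRingEnd ℂ) (Complex.exp (Complex.I * y * t) * ((χ t : ℝ) : ℂ))) (-ξ) := by
      funext ξ
      simp only [map_mul, ← Complex.exp_conj, Complex.conj_ofReal]
      congr 2
      simp only [map_mul, Complex.conj_I, Complex.conj_ofReal]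
      push_cast
      ring
    have e2 := integral_neg_eq_self
      (fun t : ℝ => (starRingEnd ℂ) (Complex.exp (Complex.I * y * t) * ((χ t : ℝ) : ℂ))) volume
    rw [e1, e2, integral_conj]
  have h1 : (fun ξ : ℝ => Complex.exp (Complex.I * y * ξ) * ((chiE χ ξ : ℝ) : ℂ))
      = fun ξ : ℝ => (Complex.exp (Complex.I * y * ξ) * ((χ ξ : ℝ) : ℂ)
          + Complex.exp (Complex.I * y * ξ) * ((χ (-ξ) : ℝ) : ℂ)) / 2 := by
    funext ξ; unfold chiE; push_cast; ring
  rw [h1, integral_div, integral_add hint hint2, h2, ← hW, Complex.add_conj]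
  have hchk : chk χ y = (2 * π)⁻¹ * W.re := by
    simp only [chk, IFT, ← hW, Complex.real_smul, Complex.re_ofReal_mul]
  rw [hchk]
  have hπ : (2 * π) ≠ 0 := by positivity
  have hπc : ((2:ℂ) * (π:ℂ)) ≠ 0 := by
    have : ((2 * π : ℝ) : ℂ) ≠ 0 := Complex.ofReal_ne_zero.mpr hπ
    push_cast at this; exact this
  push_cast
  rw [← mul_assoc, mul_inv_cancel₀ hπc, one_mul]; ring

lemma pF_cont (hχ : IsCutoff χ) (a ω : ℝ) : Continuous (pF χ a ω) := by
  have h := chiE_cont hχ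
  unfold pF
  fun_prop

lemma pF_eval_zero (hχ : IsCutoff χ) {a ω ξ : ℝ} (h : |ω| + 1 ≤ |ξ|) : pF χ a ω ξ = 0 := by
  have h1 : chiE χ (ξ - ω) = 0 := by
    apply chiE_zero hχ
    have := abs_abs_sub_abs_le_abs_sub ξ ω
    have h2 := le_abs_self (|ξ| - |ω|)
    have h3 := abs_nonneg ω
    linarith [le_trans (le_trans (by linarith : (1:ℝ)/2 ≤ |ξ| - |ω|) h2) this]
  have h2 : chiE χ (ξ + ω) = 0 := by
    apply chiE_zero hχ
    have := abs_abs_sub_abs_le_abs_sub ξ (-ω)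
    rw [sub_neg_eq_add, abs_neg] at this
    have h2 := le_abs_self (|ξ| - |ω|)
    have h3 := abs_nonneg ω
    linarith [le_trans (le_trans (by linarith : (1:ℝ)/2 ≤ |ξ| - |ω|) h2) this]
  simp [pF, h1, h2]

lemma pF_hcs (hχ : IsCutoff χ) (a ω : ℝ) : HasCompactSupport (pF χ a ω) := by
  apply HasCompactSupport.intro (isCompact_Icc (a := -(|ω| + 1)) (b := |ω| + 1))
  intro ξ hξ
  rw [Set.mem_Icc, not_and_or, not_le, not_le] at hξ
  apply pF_eval_zero hχ
  rw [le_abs]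
  rcases hξ with h | h
  · right; linarith
  · left; linarith

lemma pF_int (hχ : IsCutoff χ) (a ω x : ℝ) :
    Integrable fun ξ : ℝ => Complex.exp (Complex.I * x * ξ) * pF χ a ω ξ :=
  integrable_exp_mul (pF_cont hχ a ω) (pF_hcs hχ a ω) x

lemma chiE_shift_cont (hχ : IsCutoff χ) (ω : ℝ) :
    Continuous fun ξ : ℝ => ((chiE χ (ξ - ω) : ℝ) : ℂ) := by
  have h := chiE_cont hχ; fun_prop

lemma chiE_shift_hcs (hχ : IsCutoff χ) (ω : ℝ) :
    HasCompactSupport fun ξ : ℝ => ((chiE χ (ξ - ω) : ℝ) : ℂ) := by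
  apply HasCompactSupport.intro (isCompact_Icc (a := ω - 1/2) (b := ω + 1/2))
  intro ξ hξ
  rw [Set.mem_Icc, not_and_or, not_le, not_le] at hξ
  have : chiE χ (ξ - ω) = 0 := by
    apply chiE_zero hχ
    rw [le_abs]
    rcases hξ with h | h
    · right; linarith
    · left; linarith
  simp [this]

lemma chiE_shift_int (hχ : IsCutoff χ) (y ω : ℝ) :
    Integrable fun ξ : ℝ => Complex.exp (Complex.I * y * ξ) * ((chiE χ (ξ - ω) : ℝ) : ℂ) :=
  integrable_exp_mul (chiE_shift_cont hχ ω) (chiE_shift_hcs hχ ω) y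

lemma integral_exp_chiE_shift (hχ : IsCutoff χ) (y ω : ℝ) :
    (∫ ξ : ℝ, Complex.exp (Complex.I * y * ξ) * ((chiE χ (ξ - ω) : ℝ) : ℂ))
      = Complex.exp (Complex.I * y * ω) * ((2 * π * chk χ y : ℝ) : ℂ) := by
  have hshift := integral_add_right_eq_self (μ := volume)
    (fun ξ : ℝ => Complex.exp (Complex.I * y * ξ) * ((chiE χ (ξ - ω) : ℝ) : ℂ)) ω
  rw [← hshift]
  have e : (fun ξ : ℝ =>
      (fun t : ℝ => Complex.exp (Complex.I * y * t) * ((chiE χ (t - ω) : ℝ) : ℂ)) (ξ + ω))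
      = fun ξ : ℝ => Complex.exp (Complex.I * y * ω)
          * (Complex.exp (Complex.I * y * ξ) * ((chiE χ ξ : ℝ) : ℂ)) := by
    funext ξ
    simp only [add_sub_cancel_right]
    rw [← mul_assoc, ← Complex.exp_add]
    congr 2
    push_cast
    ring
  rw [e, integral_const_mul, integral_exp_chiE hχ y]

lemma exp_sum_cos (y ω : ℝ) :
    Complex.exp (Complex.I * y * ω) + Complex.exp (Complex.I * y * (-ω : ℝ))
      = 2 * ((Real.cos (y * ω) : ℝ) : ℂ) := by
  rw [Complex.ofReal_cos]
  rw [show Complex.I * (y:ℝ) * (ω:ℝ) = ((y * ω : ℝ) : ℂ) * Complex.I by push_cast; ring,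
    show Complex.I * (y:ℝ) * ((-ω : ℝ) : ℂ) = (-(y * ω : ℝ) : ℂ) * Complex.I by push_cast; ring,
    Complex.exp_mul_I, Complex.exp_mul_I, Complex.cos_neg, Complex.sin_neg]
  push_cast
  ring

lemma IFT_pF (hχ : IsCutoff χ) (a ω x : ℝ) :
    IFT (pF χ a ω) x = ((Real.cos ((x + a) * ω) * chk χ (x + a) : ℝ) : ℂ) := by
  set y := x + a with hy
  have e2 : (fun ξ : ℝ => Complex.exp (Complex.I * x * ξ) * pF χ a ω ξ)
      = fun ξ : ℝ => (Complex.exp (Complex.I * y * ξ) * ((chiE χ (ξ - ω) : ℝ) : ℂ)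
          + Complex.exp (Complex.I * y * ξ) * ((chiE χ (ξ - (-ω)) : ℝ) : ℂ)) / 2 := by
    funext ξ
    simp only [pF, sub_neg_eq_add]
    rw [show Complex.I * (y:ℝ) * (ξ:ℝ) = Complex.I * (x:ℝ) * (ξ:ℝ) + Complex.I * (a:ℝ) * (ξ:ℝ)
      by push_cast [hy]; ring, Complex.exp_add]
    push_cast
    ring
  simp only [IFT]
  rw [e2, integral_div, integral_add (chiE_shift_int hχ y ω) (chiE_shift_int hχ y (-ω)),
    integral_exp_chiE_shift hχ y ω, integral_exp_chiE_shift hχ y (-ω)]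
  rw [Complex.real_smul]
  rw [show Complex.exp (Complex.I * (y:ℝ) * (ω:ℝ)) * ((2 * π * chk χ y : ℝ) : ℂ)
        + Complex.exp (Complex.I * (y:ℝ) * ((-ω : ℝ) : ℂ)) * ((2 * π * chk χ y : ℝ) : ℂ)
      = (Complex.exp (Complex.I * (y:ℝ) * (ω:ℝ)) + Complex.exp (Complex.I * (y:ℝ) * ((-ω:ℝ):ℂ)))
          * ((2 * π * chk χ y : ℝ) : ℂ) from by ring]
  rw [exp_sum_cos y ω]
  have hπc : ((2:ℂ) * (π:ℂ)) ≠ 0 := by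
    have : ((2 * π : ℝ) : ℂ) ≠ 0 := Complex.ofReal_ne_zero.mpr (by positivity)
    push_cast at this; exact this
  push_cast
  field_simp

lemma integral_exp_pF (hχ : IsCutoff χ) (a ω x : ℝ) :
    (∫ ξ : ℝ, Complex.exp (Complex.I * x * ξ) * pF χ a ω ξ)
      = ((2 * π : ℝ) : ℂ) * ((Real.cos ((x + a) * ω) * chk χ (x + a) : ℝ) : ℂ) := by
  have h := IFT_pF hχ a ω x
  simp only [IFT, Complex.real_smul] at h
  rw [← h, ← mul_assoc, ← Complex.ofReal_mul, mul_inv_cancel₀ (by positivity : (2*π) ≠ 0),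
    Complex.ofReal_one, one_mul]

lemma u0_eq (hχ : IsCutoff χ) (n : ℕ) (x : ℝ) :
    ((u0 χ n x : ℝ) : ℂ) = IFT (Gfun χ n) x := by
  have hRHS : IFT (Gfun χ n) x
      = ((coefn n : ℝ) : ℂ) * ∑ ℓ ∈ Nset n,
          (((Real.cos ((x + (2:ℝ)^(ℓ+1)*gam) * ((2:ℝ)^n*gam + (2:ℝ)^ℓ*gam))
              * chk χ (x + (2:ℝ)^(ℓ+1)*gam) : ℝ) : ℂ)
           + ((Real.cos ((x + (2:ℝ)^(ℓ+1)*gam) * ((2:ℝ)^n*gam - (2:ℝ)^ℓ*gam))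
              * chk χ (x + (2:ℝ)^(ℓ+1)*gam) : ℝ) : ℂ)) := by
    simp only [IFT, Gfun]
    have e : (fun ξ : ℝ => Complex.exp (Complex.I * x * ξ)
        * (((coefn n : ℝ) : ℂ) * ∑ ℓ ∈ Nset n,
            (pF χ ((2:ℝ)^(ℓ+1)*gam) ((2:ℝ)^n*gam + (2:ℝ)^ℓ*gam) ξ +
             pF χ ((2:ℝ)^(ℓ+1)*gam) ((2:ℝ)^n*gam - (2:ℝ)^ℓ*gam) ξ)))
        = fun ξ : ℝ => ((coefn n : ℝ) : ℂ) * ∑ ℓ ∈ Nset n,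
            (Complex.exp (Complex.I * x * ξ) * pF χ ((2:ℝ)^(ℓ+1)*gam) ((2:ℝ)^n*gam + (2:ℝ)^ℓ*gam) ξ
             + Complex.exp (Complex.I * x * ξ) * pF χ ((2:ℝ)^(ℓ+1)*gam) ((2:ℝ)^n*gam - (2:ℝ)^ℓ*gam) ξ) := by
      funext ξ
      rw [mul_left_comm]
      congr 1
      rw [Finset.mul_sum]
      exact Finset.sum_congr rfl fun ℓ _ => by ring
    rw [e, integral_const_mul,
      integral_finset_sum (Nset n)
        (f := fun (ℓ : ℕ) (ξ : ℝ) => Complex.exp (Complex.I*x*ξ)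
            * pF χ ((2:ℝ)^(ℓ+1)*gam) ((2:ℝ)^n*gam + (2:ℝ)^ℓ*gam) ξ
          + Complex.exp (Complex.I*x*ξ)
            * pF χ ((2:ℝ)^(ℓ+1)*gam) ((2:ℝ)^n*gam - (2:ℝ)^ℓ*gam) ξ)
        (fun ℓ _ => (pF_int hχ _ _ x).add (pF_int hχ _ _ x))]
    have e2 : ∀ ℓ ∈ Nset n,
        (∫ ξ : ℝ, Complex.exp (Complex.I * x * ξ)
            * pF χ ((2:ℝ)^(ℓ+1)*gam) ((2:ℝ)^n*gam + (2:ℝ)^ℓ*gam) ξ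
         + Complex.exp (Complex.I * x * ξ)
            * pF χ ((2:ℝ)^(ℓ+1)*gam) ((2:ℝ)^n*gam - (2:ℝ)^ℓ*gam) ξ)
        = ((2 * π : ℝ) : ℂ) *
          (((Real.cos ((x + (2:ℝ)^(ℓ+1)*gam) * ((2:ℝ)^n*gam + (2:ℝ)^ℓ*gam))
              * chk χ (x + (2:ℝ)^(ℓ+1)*gam) : ℝ) : ℂ)
           + ((Real.cos ((x + (2:ℝ)^(ℓ+1)*gam) * ((2:ℝ)^n*gam - (2:ℝ)^ℓ*gam))
              * chk χ (x + (2:ℝ)^(ℓ+1)*gam) : ℝ) : ℂ)) := by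
      intro ℓ _
      rw [integral_add (pF_int hχ _ _ x) (pF_int hχ _ _ x),
        integral_exp_pF hχ, integral_exp_pF hχ]
      ring
    rw [Finset.sum_congr rfl e2, ← Finset.mul_sum, Complex.real_smul]
    set S : ℂ := ∑ ℓ ∈ Nset n,
          (((Real.cos ((x + (2:ℝ)^(ℓ+1)*gam) * ((2:ℝ)^n*gam + (2:ℝ)^ℓ*gam))
              * chk χ (x + (2:ℝ)^(ℓ+1)*gam) : ℝ) : ℂ)
           + ((Real.cos ((x + (2:ℝ)^(ℓ+1)*gam) * ((2:ℝ)^n*gam - (2:ℝ)^ℓ*gam))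
              * chk χ (x + (2:ℝ)^(ℓ+1)*gam) : ℝ) : ℂ)) with hS
    have hstep : ((((2*π)⁻¹ : ℝ)) : ℂ) * (((coefn n : ℝ):ℂ) * (((2*π : ℝ):ℂ) * S))
        = ((((2*π)⁻¹ * (2*π) : ℝ)):ℂ) * (((coefn n : ℝ):ℂ) * S) := by push_cast; ring
    rw [hstep, inv_mul_cancel₀ (by positivity : (2*π:ℝ) ≠ 0), Complex.ofReal_one, one_mul]
  rw [hRHS]
  simp only [u0, coefn]
  push_cast
  rw [Finset.mul_sum, Finset.mul_sum]
  exact Finset.sum_congr rfl fun ℓ _ => by ring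

lemma chiE_shift_smooth (hχ : IsCutoff χ) (ω : ℝ) :
    ContDiff ℝ (⊤ : ℕ∞) fun ξ : ℝ => chiE χ (ξ - ω) := by
  unfold chiE
  exact ((hχ.1.comp (contDiff_id.sub contDiff_const)).add
    (hχ.1.comp ((contDiff_id.sub contDiff_const).neg))).div_const 2

lemma pF_smooth (hχ : IsCutoff χ) (a ω : ℝ) : ContDiff ℝ (⊤ : ℕ∞) (pF χ a ω) := by
  have hexp : ContDiff ℝ (⊤ : ℕ∞) fun ξ : ℝ => Complex.exp (Complex.I * a * ξ) :=
    (contDiff_const.mul Complex.ofRealCLM.contDiff).cexp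
  have h1 : ContDiff ℝ (⊤ : ℕ∞) fun ξ : ℝ => (chiE χ (ξ - ω) + chiE χ (ξ + ω)) / 2 := by
    have h2 : ContDiff ℝ (⊤ : ℕ∞) fun ξ : ℝ => chiE χ (ξ + ω) := by
      have := chiE_shift_smooth hχ (-ω)
      simpa [sub_neg_eq_add] using this
    exact ((chiE_shift_smooth hχ ω).add h2).div_const 2
  exact hexp.mul (Complex.ofRealCLM.contDiff.comp h1)

lemma Gfun_smooth (hχ : IsCutoff χ) (n : ℕ) : ContDiff ℝ (⊤ : ℕ∞) (Gfun χ n) := by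
  unfold Gfun
  exact contDiff_const.mul
    (ContDiff.sum fun ℓ _ => (pF_smooth hχ _ _).add (pF_smooth hχ _ _))

lemma Gfun_vanish (hχ : IsCutoff χ) {n : ℕ} (hn : 100 ≤ n) {ξ : ℝ}
    (H : |ξ| ≤ 2/3 * 2^n ∨ 3/4 * 2^n ≤ |ξ|) : Gfun χ n ξ = 0 := by
  simp only [Gfun]
  rw [Finset.sum_eq_zero, mul_zero]
  intro ℓ hℓ
  simp only [Nset, Finset.mem_filter, Finset.mem_range] at hℓ
  obtain ⟨-, -, -, h2l⟩ := hℓ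
  set T : ℝ := (2:ℝ)^n with hT'
  set L : ℝ := (2:ℝ)^ℓ with hL'
  have hL1 : (1:ℝ) ≤ L := one_le_pow₀ one_le_two
  have hL2 : L^2 ≤ T := by
    rw [hL', hT', ← pow_mul]
    exact pow_le_pow_right₀ one_le_two (by omega)
  have hT : (1000:ℝ) ≤ T := by
    rw [hT']
    calc (1000:ℝ) ≤ 2^100 := by norm_num
    _ ≤ 2^n := pow_le_pow_right₀ one_le_two hn
  have key : ∀ ω : ℝ, T*gam - L*gam ≤ ω → ω ≤ T*gam + L*gam →
      chiE χ (ξ - ω) = 0 ∧ chiE χ (ξ + ω) = 0 := by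
    intro ω h1 h2
    have hω0 : 0 ≤ ω := by unfold gam at h1; nlinarith
    have hhalf : 1/2 ≤ |(|ξ| - ω)| := by
      rcases H with H | H
      · rw [le_abs]; right; unfold gam at h1 h2; nlinarith [sq_nonneg (L - 18)]
      · rw [le_abs]; left; unfold gam at h1 h2; nlinarith [sq_nonneg (L - 18)]
    constructor
    · apply chiE_zero hχ
      calc (1:ℝ)/2 ≤ |(|ξ| - ω)| := hhalf
      _ = |(|ξ| - |ω|)| := by rw [abs_of_nonneg hω0]
      _ ≤ |ξ - ω| := abs_abs_sub_abs_le_abs_sub ξ ω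
    · apply chiE_zero hχ
      calc (1:ℝ)/2 ≤ |(|ξ| - ω)| := hhalf
      _ = |(|ξ| - |-ω|)| := by rw [abs_neg, abs_of_nonneg hω0]
      _ ≤ |ξ - -ω| := abs_abs_sub_abs_le_abs_sub ξ (-ω)
      _ = |ξ + ω| := by rw [sub_neg_eq_add]
  have hA := key (T*gam + L*gam) (by unfold gam; nlinarith) (le_refl _)
  have hB := key (T*gam - L*gam) (le_refl _) (by unfold gam; nlinarith)
  simp [pF, hA.1, hA.2, hB.1, hB.2]

lemma Gfun_supp (hχ : IsCutoff χ) {n : ℕ} (hn : 100 ≤ n) {ξ : ℝ} (h : Gfun χ n ξ ≠ 0) :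
    2/3 * 2^n < |ξ| ∧ |ξ| < 3/4 * 2^n := by
  constructor
  · by_contra hc
    push_neg at hc
    exact h (Gfun_vanish hχ hn (Or.inl hc))
  · by_contra hc
    push_neg at hc
    exact h (Gfun_vanish hχ hn (Or.inr hc))

lemma exists_schwartz {f : ℝ → ℂ} (hf : ContDiff ℝ (⊤ : ℕ∞) f) (hs : HasCompactSupport f) :
    ∃ s : SchwartzMap ℝ ℂ, ⇑s = f := by
  refine ⟨⟨f, hf.of_le (by simp), fun k m => ?_⟩, rfl⟩
  have h1 : Continuous fun x : ℝ => ‖x‖^k * ‖iteratedFDeriv ℝ m f x‖ :=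
    (continuous_id.norm.pow k).mul (hf.continuous_iteratedFDeriv (by exact_mod_cast le_top)).norm
  have h2 : HasCompactSupport fun x : ℝ => ‖x‖^k * ‖iteratedFDeriv ℝ m f x‖ := by
    apply HasCompactSupport.intro (hs.iteratedFDeriv (𝕜 := ℝ) m)
    intro x hx
    simp [image_eq_zero_of_notMem_tsupport hx]
  obtain ⟨C, hC⟩ := h1.bounded_above_of_compact_support h2
  exact ⟨C, fun x => by
    have := hC x
    rwa [Real.norm_eq_abs, abs_of_nonneg (by positivity)] at this⟩


lemma FT_eq (f : ℝ → ℂ) (ξ : ℝ) : FT f ξ = FourierTransform.fourier f (ξ / (2*π)) := by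
  rw [Real.fourier_real_eq_integral_exp_smul]
  simp only [FT]
  have hπ : (π:ℂ) ≠ 0 := Complex.ofReal_ne_zero.mpr Real.pi_ne_zero
  have e : (fun v : ℝ => Complex.exp (((-2 * π * v * (ξ / (2*π)) : ℝ) : ℂ) * Complex.I) • f v)
      = fun x : ℝ => Complex.exp (-(Complex.I * x * ξ)) * f x := by
    funext v
    rw [smul_eq_mul]
    congr 2
    push_cast
    field_simp
  rw [e]

lemma IFT_eq2 (g : ℝ → ℂ) (x : ℝ) :
    IFT g x = FourierTransformInv.fourierInv (fun η : ℝ => g (2*π*η)) x := by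
  rw [Real.fourierInv_eq_fourier_neg,
    Real.fourier_real_eq_integral_exp_smul]
  have e : (fun v : ℝ => Complex.exp (((-2*π*v*(-x) : ℝ) : ℂ) * Complex.I)
        • (fun η : ℝ => g (2*π*η)) v)
      = fun v : ℝ => (fun ξ : ℝ => Complex.exp (Complex.I * x * ξ) * g ξ) (2*π*v) := by
    funext v
    beta_reduce
    rw [smul_eq_mul]
    congr 2
    push_cast
    ring
  rw [e, Measure.integral_comp_mul_left (fun ξ : ℝ => Complex.exp (Complex.I * x * ξ) * g ξ) (2*π)]
  simp only [IFT]
  rw [abs_of_pos (by positivity : (0:ℝ) < (2*π)⁻¹)]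

lemma FT_u0 (hχ : IsCutoff χ) {n : ℕ} (hn : 100 ≤ n) (ξ : ℝ) :
    FT (fun x : ℝ => ((u0 χ n x : ℝ) : ℂ)) ξ = Gfun χ n ξ := by
  set h : ℝ → ℂ := fun η => Gfun χ n (2*π*η) with hh
  have hsm : ContDiff ℝ (⊤ : ℕ∞) h := (Gfun_smooth hχ n).comp (contDiff_const.mul contDiff_id)
  have hcont : Continuous h := hsm.continuous
  have hπ1 : (1:ℝ) ≤ π := by linarith [Real.pi_gt_three]
  have hhcs : HasCompactSupport h := by
    apply HasCompactSupport.intro (isCompact_Icc (a := -(2^n : ℝ)) (b := (2^n : ℝ)))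
    intro η hη
    rw [Set.mem_Icc, not_and_or, not_le, not_le] at hη
    apply Gfun_vanish hχ hn
    right
    have h2n : (0:ℝ) < 2^n := by positivity
    rw [abs_mul, abs_of_pos (by positivity : (0:ℝ) < 2*π)]
    have hb : (2:ℝ)^n ≤ |η| := by
      rcases hη with h | h
      · rw [abs_of_neg (by nlinarith : η < 0)]; linarith
      · rw [abs_of_pos (by nlinarith : 0 < η)]; linarith
    nlinarith [abs_nonneg η]
  have hint : Integrable h := hcont.integrable_of_hasCompactSupport hhcs
  obtain ⟨s, hs⟩ := exists_schwartz hsm hhcs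
  have hFint : Integrable (FourierTransform.fourier h) := by
    rw [← hs]
    have := (SchwartzMap.fourierTransformCLM ℂ s).integrable (μ := volume)
    rwa [SchwartzMap.fourierTransformCLM_apply, SchwartzMap.fourier_coe] at this
  have hu : (fun x : ℝ => ((u0 χ n x : ℝ) : ℂ)) = FourierTransformInv.fourierInv h := by
    funext x
    rw [u0_eq hχ n x, IFT_eq2]
  rw [FT_eq, hu, hcont.fourier_fourierInv_eq hint hFint]
  simp only [hh]
  congr 1
  field_simp

end S4

/-- spectral localization of the initial data. -/
theorem statement4 (χ χt : ℝ → ℝ) (hχ : IsCutoff χ) (hχt : IsLPCutoff χt) :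
    ∃ n₀ : ℕ, ∀ n : ℕ, n₀ ≤ n → 16 ∣ n →
      (Function.support (FT (fun x => ((u0 χ n x : ℝ) : ℂ))) ⊆
        {ξ : ℝ | 4/3 * (2:ℝ) ^ ((n:ℤ) - 1) ≤ |ξ| ∧ |ξ| ≤ 3/2 * (2:ℝ) ^ ((n:ℤ) - 1)}) ∧
      (∀ x : ℝ, LP χt ((n:ℤ) - 1) (fun y => ((u0 χ n y : ℝ) : ℂ)) x = (u0 χ n x : ℂ)) ∧
      (∀ j : ℤ, -1 ≤ j → j ≠ (n:ℤ) - 1 →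
        ∀ x : ℝ, LP χt j (fun y => ((u0 χ n y : ℝ) : ℂ)) x = 0) := by
  refine ⟨100, fun n hn _ => ?_⟩
  have h2n1 : (2:ℝ)^((n:ℤ)-1) = 2^n / 2 := by
    rw [zpow_sub₀ (two_ne_zero), zpow_natCast, zpow_one]
  have hTbig : (1000:ℝ) ≤ 2^n := by
    calc (1000:ℝ) ≤ 2^100 := by norm_num
    _ ≤ 2^n := pow_le_pow_right₀ one_le_two hn
  refine ⟨?_, ?_, ?_⟩
  · -- support
    intro ξ hξ
    have hG : S4.Gfun χ n ξ ≠ 0 := by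
      rwa [Function.mem_support, S4.FT_u0 hχ hn] at hξ
    obtain ⟨hl, hr⟩ := S4.Gfun_supp hχ hn hG
    simp only [Set.mem_setOf_eq]
    constructor
    · rw [h2n1]; linarith
    · rw [h2n1]; linarith
  · -- LP at n-1
    intro x
    have hne : ¬((n:ℤ) - 1 = -1) := by omega
    unfold LP
    rw [if_neg hne]
    have hfun : (fun ξ : ℝ =>
        ((χt ((2:ℝ)^(-((n:ℤ)-1)) * ξ / 2) - χt ((2:ℝ)^(-((n:ℤ)-1)) * ξ) : ℝ) : ℂ)
          * FT (fun y : ℝ => ((u0 χ n y : ℝ) : ℂ)) ξ) = S4.Gfun χ n := by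
      funext ξ
      rw [S4.FT_u0 hχ hn ξ]
      by_cases hG : S4.Gfun χ n ξ = 0
      · rw [hG, mul_zero]
      · obtain ⟨hl, hr⟩ := S4.Gfun_supp hχ hn hG
        have hP : (0:ℝ) < (2:ℝ)^(-((n:ℤ)-1)) := zpow_pos two_pos _
        have hPn : (2:ℝ)^(-((n:ℤ)-1)) * 2^n = 2 := by
          rw [show ((2:ℝ)^n) = (2:ℝ)^(n:ℤ) from (zpow_natCast 2 n).symm,
            ← zpow_add₀ (two_ne_zero (α := ℝ))]
          norm_num
        have habs : |(2:ℝ)^(-((n:ℤ)-1)) * ξ| = (2:ℝ)^(-((n:ℤ)-1)) * |ξ| := by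
          rw [abs_mul, abs_of_pos hP]
        have hb1 := mul_lt_mul_of_pos_left hl hP
        have hb2 := mul_lt_mul_of_pos_left hr hP
        have e1 : (2:ℝ)^(-((n:ℤ)-1)) * (2/3*2^n) = 4/3 := by
          rw [show (2:ℝ)^(-((n:ℤ)-1)) * (2/3*2^n)
            = 2/3 * ((2:ℝ)^(-((n:ℤ)-1)) * 2^n) from by ring, hPn]
          norm_num
        have e2 : (2:ℝ)^(-((n:ℤ)-1)) * (3/4*2^n) = 3/2 := by
          rw [show (2:ℝ)^(-((n:ℤ)-1)) * (3/4*2^n)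
            = 3/4 * ((2:ℝ)^(-((n:ℤ)-1)) * 2^n) from by ring, hPn]
          norm_num
        rw [e1] at hb1
        rw [e2] at hb2
        have h43 : 4/3 ≤ |(2:ℝ)^(-((n:ℤ)-1)) * ξ| := by rw [habs]; linarith
        have h32 : |(2:ℝ)^(-((n:ℤ)-1)) * ξ| ≤ 3/2 := by rw [habs]; linarith
        rw [hχt.2.2.2.2.2 _ h43 h32]
        norm_num
    rw [hfun, ← S4.u0_eq hχ n x]
  · -- LP away from n-1
    intro j hj hjne x
    by_cases hj1 : j = -1
    · subst hj1
      unfold LP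
      rw [if_pos rfl]
      have hfun : (fun ξ : ℝ => ((χt ξ : ℝ) : ℂ) * FT (fun y : ℝ => ((u0 χ n y : ℝ) : ℂ)) ξ)
          = fun _ => (0:ℂ) := by
        funext ξ
        rw [S4.FT_u0 hχ hn ξ]
        by_cases hG : S4.Gfun χ n ξ = 0
        · rw [hG, mul_zero]
        · obtain ⟨hl, hr⟩ := S4.Gfun_supp hχ hn hG
          have hz : χt ξ = 0 := by
            apply hχt.2.2.2.2.1
            calc (4:ℝ)/3 < 2/3*2^n := by linarith
            _ < |ξ| := hl
          rw [hz]
          norm_num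
      rw [hfun]
      simp [IFT]
    · simp only [LP]
      rw [if_neg hj1]
      have hfun : (fun ξ : ℝ => ((χt ((2:ℝ)^(-j) * ξ / 2) - χt ((2:ℝ)^(-j) * ξ) : ℝ) : ℂ)
          * FT (fun y : ℝ => ((u0 χ n y : ℝ) : ℂ)) ξ) = fun _ => (0:ℂ) := by
        funext ξ
        rw [S4.FT_u0 hχ hn ξ]
        by_cases hG : S4.Gfun χ n ξ = 0
        · rw [hG, mul_zero]
        · obtain ⟨hl, hr⟩ := S4.Gfun_supp hχ hn hG
          have hP : (0:ℝ) < (2:ℝ)^(-j) := zpow_pos two_pos _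
          have habs : |(2:ℝ)^(-j) * ξ| = (2:ℝ)^(-j) * |ξ| := by rw [abs_mul, abs_of_pos hP]
          have hPn : (2:ℝ)^(-j) * 2^n = (2:ℝ)^((n:ℤ) - j) := by
            rw [show ((2:ℝ)^n) = (2:ℝ)^(n:ℤ) from (zpow_natCast 2 n).symm,
              ← zpow_add₀ (two_ne_zero (α := ℝ))]
            congr 1
            ring
          rcases lt_or_ge j ((n:ℤ)-1) with hc | hc
          · have h2 : (2:ℤ) ≤ (n:ℤ) - j := by omega
            have hge : (4:ℝ) ≤ (2:ℝ)^((n:ℤ)-j) := by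
              calc (4:ℝ) = (2:ℝ)^(2:ℤ) := by norm_num
              _ ≤ _ := zpow_le_zpow_right₀ one_le_two h2
            have hb1 := mul_lt_mul_of_pos_left hl hP
            have e1 : (2:ℝ)^(-j) * (2/3*2^n) = 2/3 * (2:ℝ)^((n:ℤ)-j) := by
              rw [show (2:ℝ)^(-j) * (2/3*2^n) = 2/3 * ((2:ℝ)^(-j) * 2^n) from by ring, hPn]
            rw [e1] at hb1
            have hgt : 8/3 < |(2:ℝ)^(-j) * ξ| := by
              rw [habs]
              linarith
            have hz1 : χt ((2:ℝ)^(-j) * ξ) = 0 := hχt.2.2.2.2.1 _ (by linarith)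
            have hz2 : χt ((2:ℝ)^(-j) * ξ / 2) = 0 := by
              apply hχt.2.2.2.2.1
              rw [abs_div, abs_two]
              linarith
            rw [hz1, hz2]
            norm_num
          · have hcn : (n:ℤ) ≤ j := by omega
            have hle : (2:ℝ)^((n:ℤ)-j) ≤ 1 := by
              calc (2:ℝ)^((n:ℤ)-j) ≤ (2:ℝ)^(0:ℤ) := zpow_le_zpow_right₀ one_le_two (by omega)
              _ = 1 := by norm_num
            have hb2 := mul_lt_mul_of_pos_left hr hP
            have e2 : (2:ℝ)^(-j) * (3/4*2^n) = 3/4 * (2:ℝ)^((n:ℤ)-j) := by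
              rw [show (2:ℝ)^(-j) * (3/4*2^n) = 3/4 * ((2:ℝ)^(-j) * 2^n) from by ring, hPn]
            rw [e2] at hb2
            have hlt : |(2:ℝ)^(-j) * ξ| < 3/4 := by
              rw [habs]
              linarith
            have ho1 : χt ((2:ℝ)^(-j) * ξ) = 1 := hχt.2.2.2.1 _ (by linarith)
            have ho2 : χt ((2:ℝ)^(-j) * ξ / 2) = 1 := by
              apply hχt.2.2.2.1
              rw [abs_div, abs_two]
              linarith
            rw [ho1, ho2]
            norm_num
      rw [hfun]
      simp [IFT]

end
end

section
/- Let p ∈ [1, ∞) and let g : ℝ → ℝ be a nonzero Schwartz function. Then lim_{λ→∞} ∫_ℝ |cos(λx)|^p |g(x)|^p dx = ((2π)^{-1} ∫_0^{2π} |cos θ|^p dθ) · ∫_ℝ |g(x)|^p dx. In particular, there exist c > 0 and λ₀ > 0 such that ‖cos(λ·) g‖_{L^p} ≥ c ‖g‖_{L^p} for all λ ≥ λ₀. -/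
open MeasureTheory Real Filter Set ENNReal

noncomputable section

open Topology

namespace S7

lemma bddOf {f : ℝ → ℝ} (hc : Continuous f) (hs : HasCompactSupport f) :
    ∃ D : ℝ, 0 ≤ D ∧ ∀ x, |f x| ≤ D := by
  obtain ⟨C, hC⟩ := hs.isCompact.exists_bound_of_continuousOn hc.continuousOn
  refine ⟨max C 0, le_max_right _ _, fun x => ?_⟩
  by_cases hx : x ∈ tsupport f
  · exact le_trans (by simpa [Real.norm_eq_abs] using hC x hx) (le_max_left _ _)
  · rw [image_eq_zero_of_notMem_tsupport hx]
    simp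

lemma prim_bound {h : ℝ → ℝ} (hc : Continuous h)
    (hper : Function.Periodic h (2 * π))
    (hmean : ∫ t in (0:ℝ)..(2 * π), h t = 0) :
    ∃ C : ℝ, 0 ≤ C ∧ ∀ θ : ℝ, |∫ t in (0:ℝ)..θ, h t| ≤ C := by
  set H : ℝ → ℝ := fun θ => ∫ t in (0:ℝ)..θ, h t with hH
  have hHcont : Continuous H :=
    intervalIntegral.continuous_primitive (fun a b => hc.intervalIntegrable a b) 0
  have hHper : Function.Periodic H (2 * π) := by
    intro θ
    have h1 : ∫ t in θ..(θ + 2 * π), h t = 0 := by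
      rw [hper.intervalIntegral_add_eq θ 0]
      simpa using hmean
    have h2 := intervalIntegral.integral_add_adjacent_intervals (μ := volume) (a := 0)
      (b := θ) (c := θ + 2 * π) (hc.intervalIntegrable 0 θ) (hc.intervalIntegrable θ (θ + 2 * π))
    show (∫ t in (0:ℝ)..(θ + 2 * π), h t) = ∫ t in (0:ℝ)..θ, h t
    rw [← h2, h1, add_zero]
  obtain ⟨C, hC⟩ := (isCompact_Icc (a := (0:ℝ)) (b := 2 * π)).exists_bound_of_continuousOn
    hHcont.continuousOn
  refine ⟨max C 0, le_max_right _ _, fun θ => ?_⟩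
  obtain ⟨y, hy, hEq⟩ := hHper.exists_mem_Ico₀ (by positivity) θ
  have : |H θ| ≤ C := by
    rw [hEq]
    simpa [Real.norm_eq_abs] using hC y (Ico_subset_Icc_self hy)
  exact le_trans this (le_max_left _ _)

lemma tendsto_smooth {h : ℝ → ℝ} (hc : Continuous h) (hper : Function.Periodic h (2 * π))
    (hmean : ∫ t in (0:ℝ)..(2 * π), h t = 0) {φ : ℝ → ℝ} (hφ : ContDiff ℝ 1 φ)
    (hs : HasCompactSupport φ) :
    Tendsto (fun lam : ℝ => ∫ x : ℝ, h (lam * x) * φ x) atTop (𝓝 0) := by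
  obtain ⟨C, hC0, hC⟩ := prim_bound hc hper hmean
  obtain ⟨A0, hA0⟩ := hs.isCompact.isBounded.subset_closedBall 0
  set A : ℝ := |A0| + 1 with hA
  have hApos : 0 < A := by positivity
  have hsubset : tsupport φ ⊆ Ioo (-A) A := by
    intro x hx
    have hx2 := hA0 hx
    rw [Real.closedBall_eq_Icc] at hx2
    have h1 : 0 - A0 ≤ x := hx2.1
    have h2 : x ≤ 0 + A0 := hx2.2
    have h3 : A0 ≤ |A0| := le_abs_self A0
    have h4 : -|A0| ≤ A0 := neg_abs_le A0
    constructor <;> simp only [hA] <;> linarith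
  have hφd : Continuous (deriv φ) := hφ.continuous_deriv le_rfl
  obtain ⟨D, hD0, hD⟩ := bddOf hφd hs.deriv
  have key : ∀ lam : ℝ, 1 ≤ lam → |∫ x : ℝ, h (lam * x) * φ x| ≤ 2 * A * (D * C) / lam := by
    intro lam hlam
    have hlam0 : 0 < lam := lt_of_lt_of_le one_pos hlam
    set H : ℝ → ℝ := fun θ => ∫ t in (0:ℝ)..θ, h t with hHdef
    set v : ℝ → ℝ := fun x => (1 / lam) * H (lam * x) with hv
    have hvd : ∀ x : ℝ, HasDerivAt v (h (lam * x)) x := by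
      intro x
      have h1 : HasDerivAt H (h (lam * x)) (lam * x) :=
        intervalIntegral.integral_hasDerivAt_right (hc.intervalIntegrable 0 (lam * x))
          (hc.stronglyMeasurableAtFilter _ _) hc.continuousAt
      have hinner : HasDerivAt (fun x : ℝ => lam * x) lam x := by
        simpa using (hasDerivAt_id x).const_mul lam
      have h2 : HasDerivAt (fun x : ℝ => H (lam * x)) (h (lam * x) * lam) x := h1.comp x hinner
      have h3 := h2.const_mul (1 / lam)
      exact h3.congr_deriv (by
        rw [mul_comm (h (lam * x)) lam, ← mul_assoc, one_div, inv_mul_cancel₀ hlam0.ne', one_mul])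
    have hsupp2 : Function.support (fun x => h (lam * x) * φ x) ⊆ Ioc (-A) A := by
      intro x hx
      have hφx : φ x ≠ 0 := by
        intro h0
        apply hx
        simp [h0]
      exact Ioo_subset_Ioc_self (hsubset (subset_tsupport φ hφx))
    rw [← intervalIntegral.integral_eq_integral_of_support_subset hsupp2]
    have hcc : Continuous fun x : ℝ => h (lam * x) := hc.comp (continuous_const.mul continuous_id)
    have hibp := intervalIntegral.integral_mul_deriv_eq_deriv_mul
      (a := -A) (b := A) (u := φ) (u' := deriv φ) (v := v) (v' := fun x => h (lam * x))
      (fun x _ => ((hφ.differentiable one_ne_zero) x).hasDerivAt)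
      (fun x _ => hvd x)
      (hφd.intervalIntegrable _ _)
      (hcc.intervalIntegrable _ _)
    have heq1 : ∫ x in (-A)..A, h (lam * x) * φ x = ∫ x in (-A)..A, φ x * h (lam * x) := by
      simp [mul_comm]
    have hφA : φ A = 0 := by
      apply image_eq_zero_of_notMem_tsupport
      intro hmem
      exact absurd (hsubset hmem).2 (lt_irrefl A)
    have hφnA : φ (-A) = 0 := by
      apply image_eq_zero_of_notMem_tsupport
      intro hmem
      exact absurd (hsubset hmem).1 (lt_irrefl (-A))
    rw [heq1, hibp, hφA, hφnA]
    simp only [zero_mul, sub_zero, zero_sub, abs_neg]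
    have hvb : ∀ x : ℝ, |v x| ≤ C / lam := by
      intro x
      have : |v x| = (1 / lam) * |H (lam * x)| := by
        rw [hv, abs_mul, abs_of_pos (by positivity : (0:ℝ) < 1 / lam)]
      rw [this]
      rw [div_eq_mul_inv C lam, mul_comm C lam⁻¹, ← one_div]
      exact mul_le_mul_of_nonneg_left (hC _) (by positivity)
    have hb : ∀ x ∈ Set.uIoc (-A) A, ‖deriv φ x * v x‖ ≤ D * (C / lam) := by
      intro x _
      rw [Real.norm_eq_abs, abs_mul]
      exact mul_le_mul (hD x) (hvb x) (abs_nonneg _) hD0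
    calc |∫ x in (-A)..A, deriv φ x * v x| ≤ D * (C / lam) * |A - (-A)| :=
          intervalIntegral.norm_integral_le_of_norm_le_const hb
      _ = 2 * A * (D * C) / lam := by
          rw [abs_of_pos (by linarith : (0:ℝ) < A - (-A))]
          field_simp
          ring
  have hK : Tendsto (fun lam : ℝ => 2 * A * (D * C) / lam) atTop (𝓝 0) :=
    tendsto_const_nhds.div_atTop tendsto_id
  refine squeeze_zero_norm' ?_ hK
  filter_upwards [eventually_ge_atTop (1:ℝ)] with lam hlam
  simpa [Real.norm_eq_abs] using key lam hlam


open scoped Convolution Pointwise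

lemma smooth_approx {φ : ℝ → ℝ} (hφc : Continuous φ) (hφs : HasCompactSupport φ)
    {ε : ℝ} (hε : 0 < ε) :
    ∃ ψ : ℝ → ℝ, ContDiff ℝ 1 ψ ∧ HasCompactSupport ψ ∧ ∫ x : ℝ, |φ x - ψ x| ≤ ε := by
  obtain ⟨A0, hA0⟩ := hφs.isCompact.isBounded.subset_closedBall 0
  set A : ℝ := |A0| + 1 with hA
  have hApos : 0 < A := by positivity
  have hsub : tsupport φ ⊆ Icc (-A) A := by
    intro x hx
    have hx2 := hA0 hx
    rw [Real.closedBall_eq_Icc] at hx2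
    have h3 : A0 ≤ |A0| := le_abs_self A0
    have h4 : -|A0| ≤ A0 := neg_abs_le A0
    have h1 : 0 - A0 ≤ x := hx2.1
    have h2 : x ≤ 0 + A0 := hx2.2
    constructor <;> simp only [hA] <;> linarith
  set V : ℝ := 2 * A + 2 with hV
  have hVpos : 0 < V := by positivity
  set ε' : ℝ := ε / (V + 1) with hε'def
  have hε' : 0 < ε' := by positivity
  -- uniform continuity
  have htc : Tendsto φ (cocompact ℝ) (𝓝 0) := by
    have hev : ∀ᶠ x in cocompact ℝ, φ x = 0 := by
      refine Filter.mem_cocompact.2 ⟨tsupport φ, hφs, fun x hx => ?_⟩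
      exact image_eq_zero_of_notMem_tsupport hx
    exact tendsto_const_nhds.congr' (hev.mono fun x hx => hx.symm)
  have huc : UniformContinuous φ := hφc.uniformContinuous_of_tendsto_cocompact htc
  obtain ⟨δ0, hδ0, hδ⟩ := Metric.uniformContinuous_iff.1 huc ε' hε'
  set δ : ℝ := min δ0 1 with hδdef
  have hδpos : 0 < δ := lt_min hδ0 one_pos
  have hδ1 : δ ≤ 1 := min_le_right _ _
  set b : ContDiffBump (0:ℝ) := ⟨δ/2, δ, by positivity, by linarith⟩ with hb
  set ψ : ℝ → ℝ := (b.normed volume) ⋆[ContinuousLinearMap.lsmul ℝ ℝ, volume] φ with hψ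
  have hψd : ContDiff ℝ 1 ψ :=
    HasCompactSupport.contDiff_convolution_left _ b.hasCompactSupport_normed
      b.contDiff_normed hφc.locallyIntegrable
  have hψs : HasCompactSupport ψ :=
    HasCompactSupport.convolution _ b.hasCompactSupport_normed hφs
  refine ⟨ψ, hψd, hψs, ?_⟩
  have hpt : ∀ x : ℝ, |φ x - ψ x| ≤ ε' := by
    intro x
    have h1 : ∀ y ∈ Metric.ball x b.rOut, dist (φ y) (φ x) ≤ ε' := by
      intro y hy
      have : dist y x < δ0 :=
        lt_of_lt_of_le (Metric.mem_ball.1 hy) (show b.rOut ≤ δ0 from min_le_left _ _)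
      exact (hδ this).le
    have h2 := ContDiffBump.dist_normed_convolution_le (μ := volume) (φ := b) (g := φ) (x₀ := x)
      hφc.aestronglyMeasurable h1
    rw [Real.dist_eq] at h2
    rw [abs_sub_comm]
    exact h2
  -- support control
  set S : Set ℝ := Icc (-A - 1) (A + 1) with hS
  have hψsub : Function.support ψ ⊆ S := by
    intro x hx
    have h1 : x ∈ Function.support (b.normed volume) + Function.support φ :=
      support_convolution_subset _ hx
    obtain ⟨y, hy, z, hz, rfl⟩ := h1
    rw [b.support_normed_eq] at hy
    have hy' : |y| < δ := by simpa [Real.dist_eq] using hy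
    have hz' : z ∈ Icc (-A) A := hsub (subset_tsupport φ hz)
    have hy1 : -1 ≤ y := by have := abs_lt.1 hy'; linarith
    have hy2 : y ≤ 1 := by have := abs_lt.1 hy'; linarith
    show y + z ∈ Icc (-A - 1) (A + 1)
    rw [Set.mem_Icc]
    exact ⟨by linarith [hz'.1], by linarith [hz'.2]⟩
  have hsupp_d : Function.support (fun x => |φ x - ψ x|) ⊆ S := by
    intro x hx
    by_contra hxS
    have h1 : φ x = 0 := image_eq_zero_of_notMem_tsupport fun hmem => hxS
      (⟨by linarith [(hsub hmem).1], by linarith [(hsub hmem).2]⟩ : x ∈ S)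
    have h2 : ψ x = 0 := by
      by_contra h2
      exact hxS (hψsub h2)
    apply hx
    simp [h1, h2]
  have hSmeas : volume S < ⊤ := by
    rw [hS]
    simp [Real.volume_Icc]
  have hint_eq : ∫ x : ℝ, |φ x - ψ x| = ∫ x in S, |φ x - ψ x| := by
    rw [MeasureTheory.setIntegral_eq_integral_of_forall_compl_eq_zero]
    intro x hx
    by_contra h0
    exact hx (hsupp_d h0)
  have hle2 : ∫ x in S, |φ x - ψ x| ≤ ε' * (volume S).toReal := by
    have := MeasureTheory.norm_setIntegral_le_of_norm_le_const (μ := volume) (s := S)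
      (f := fun x => |φ x - ψ x|) (C := ε') hSmeas
      (fun x _ => by simpa [Real.norm_eq_abs, abs_abs] using hpt x)
    exact le_trans (le_abs_self _) (by simpa [Real.norm_eq_abs, Measure.real] using this)
  have hvol : (volume S).toReal ≤ V := by
    rw [hS, Real.volume_Icc, ENNReal.toReal_ofReal (by linarith)]
    simp [hV]
    linarith
  calc ∫ x : ℝ, |φ x - ψ x| ≤ ε' * (volume S).toReal := hint_eq ▸ hle2
    _ ≤ ε' * V := mul_le_mul_of_nonneg_left hvol hε'.le
    _ ≤ ε := by
        rw [hε'def]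
        rw [div_mul_eq_mul_div, div_le_iff₀ (by linarith)]
        nlinarith


lemma tendsto_weak {h : ℝ → ℝ} (hc : Continuous h) (hper : Function.Periodic h (2 * π))
    (hmean : ∫ t in (0:ℝ)..(2 * π), h t = 0) {B : ℝ} (hB : ∀ t, |h t| ≤ B)
    {f : ℝ → ℝ} (hf : Integrable f) :
    Tendsto (fun lam : ℝ => ∫ x : ℝ, h (lam * x) * f x) atTop (𝓝 0) := by
  have hB0 : 0 ≤ B := le_trans (abs_nonneg _) (hB 0)
  rw [NormedAddCommGroup.tendsto_nhds_zero]
  intro ε hε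
  set ε₁ : ℝ := ε / (3 * (B + 1)) with hε₁def
  have hε₁ : 0 < ε₁ := by positivity
  have hεeq : ε = 3 * ε₁ * B + 3 * ε₁ := by
    rw [hε₁def]; field_simp
  obtain ⟨φ, hφs, hφ1, hφc, hφint⟩ := hf.exists_hasCompactSupport_integral_sub_le hε₁
  obtain ⟨ψ, hψd, hψs, hψ1⟩ := smooth_approx hφc hφs hε₁
  have hψc : Continuous ψ := hψd.continuous
  have hψint : Integrable ψ := hψc.integrable_of_hasCompactSupport hψs
  have hsub : ∫ x : ℝ, ‖f x - ψ x‖ ≤ 2 * ε₁ := by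
    have h1 : ∀ x : ℝ, ‖f x - ψ x‖ ≤ ‖f x - φ x‖ + ‖φ x - ψ x‖ := fun x =>
      norm_sub_le_norm_sub_add_norm_sub (f x) (φ x) (ψ x)
    calc ∫ x : ℝ, ‖f x - ψ x‖ ≤ ∫ x : ℝ, (‖f x - φ x‖ + ‖φ x - ψ x‖) :=
          integral_mono (hf.sub hψint).norm
            ((hf.sub hφint).norm.add (hφint.sub hψint).norm) h1
      _ = (∫ x : ℝ, ‖f x - φ x‖) + ∫ x : ℝ, ‖φ x - ψ x‖ :=
          integral_add (hf.sub hφint).norm (hφint.sub hψint).norm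
      _ ≤ ε₁ + ε₁ := add_le_add hφ1 (by simpa [Real.norm_eq_abs] using hψ1)
      _ = 2 * ε₁ := by ring
  have hsm := tendsto_smooth hc hper hmean hψd hψs
  rw [NormedAddCommGroup.tendsto_nhds_zero] at hsm
  filter_upwards [hsm ε₁ hε₁] with lam hlam
  have hmeas : AEStronglyMeasurable (fun x : ℝ => h (lam * x)) volume :=
    (hc.comp (continuous_const.mul continuous_id)).aestronglyMeasurable
  have hbd : ∃ C, ∀ x : ℝ, ‖h (lam * x)‖ ≤ C :=
    ⟨B, fun x => by simpa [Real.norm_eq_abs] using hB (lam * x)⟩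
  have hint1 : Integrable (fun x : ℝ => h (lam * x) * (f x - ψ x)) :=
    (hf.sub hψint).bdd_mul hmeas (ae_of_all _ (Classical.choose_spec hbd))
  have hint2 : Integrable (fun x : ℝ => h (lam * x) * ψ x) := hψint.bdd_mul hmeas (ae_of_all _ (Classical.choose_spec hbd))
  have hsplit : (fun x : ℝ => h (lam * x) * f x) =
      fun x => h (lam * x) * (f x - ψ x) + h (lam * x) * ψ x := by
    funext x; ring
  rw [hsplit, integral_add hint1 hint2]
  have hb1 : ‖∫ x : ℝ, h (lam * x) * (f x - ψ x)‖ ≤ B * (2 * ε₁) := by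
    calc ‖∫ x : ℝ, h (lam * x) * (f x - ψ x)‖ ≤ ∫ x : ℝ, ‖h (lam * x) * (f x - ψ x)‖ :=
          norm_integral_le_integral_norm _
      _ ≤ ∫ x : ℝ, B * ‖f x - ψ x‖ := by
          refine integral_mono hint1.norm ((hf.sub hψint).norm.const_mul B) fun x => ?_
          rw [norm_mul]
          exact mul_le_mul_of_nonneg_right
            (by simpa [Real.norm_eq_abs] using hB (lam * x)) (norm_nonneg _)
      _ = B * ∫ x : ℝ, ‖f x - ψ x‖ := integral_const_mul B _
      _ ≤ B * (2 * ε₁) := mul_le_mul_of_nonneg_left hsub hB0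
  calc ‖(∫ x : ℝ, h (lam * x) * (f x - ψ x)) + ∫ x : ℝ, h (lam * x) * ψ x‖
      ≤ ‖∫ x : ℝ, h (lam * x) * (f x - ψ x)‖ + ‖∫ x : ℝ, h (lam * x) * ψ x‖ := norm_add_le _ _
    _ < ε := by rw [hεeq]; nlinarith [hlam, hb1]

end S7

open S7

/-- Riemann–Lebesgue type averaging lemma. -/
theorem statement7 (p : ℝ) (hp : 1 ≤ p) (g : SchwartzMap ℝ ℝ) (hg : g ≠ 0) :
    Filter.Tendsto (fun lam : ℝ => ∫ x : ℝ, |Real.cos (lam * x)| ^ p * |g x| ^ p)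
      Filter.atTop
      (nhds (((2 * Real.pi)⁻¹ * ∫ θ in (0:ℝ)..(2 * Real.pi), |Real.cos θ| ^ p) *
        ∫ x : ℝ, |g x| ^ p)) ∧
    ∃ c : ℝ, 0 < c ∧ ∃ lam₀ : ℝ, 0 < lam₀ ∧ ∀ lam : ℝ, lam₀ ≤ lam →
      ENNReal.ofReal c * eLpNorm (⇑g) (ENNReal.ofReal p) volume ≤
        eLpNorm (fun x => Real.cos (lam * x) * g x) (ENNReal.ofReal p) volume := by
  have hp0 : (0:ℝ) < p := lt_of_lt_of_le one_pos hp
  have hπ : (0:ℝ) < π := Real.pi_pos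
  set m : ℝ := (2 * Real.pi)⁻¹ * ∫ θ in (0:ℝ)..(2 * Real.pi), |Real.cos θ| ^ p with hm
  have hcont0 : Continuous fun t : ℝ => |Real.cos t| ^ p :=
    (continuous_abs.comp Real.continuous_cos).rpow_const fun x => Or.inr hp0.le
  have hfcont : Continuous fun x : ℝ => |g x| ^ p :=
    (continuous_abs.comp g.continuous).rpow_const fun x => Or.inr hp0.le
  have hgint : Integrable (fun x : ℝ => g x) volume := g.integrable
  set M : ℝ := SchwartzMap.seminorm ℝ 0 0 g with hM
  have hM0 : 0 ≤ M := apply_nonneg _ _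
  have hMle : ∀ x : ℝ, |g x| ≤ M := fun x => by
    simpa [Real.norm_eq_abs] using SchwartzMap.norm_le_seminorm ℝ g x
  -- integrability of |g|^p
  have hfint : Integrable (fun x : ℝ => |g x| ^ p) volume := by
    refine Integrable.mono ((hgint.abs.const_mul ((M + 1) ^ (p - 1))))
      hfcont.aestronglyMeasurable ?_
    filter_upwards with x
    rw [Real.norm_eq_abs, Real.norm_eq_abs]
    have h1 : (0:ℝ) ≤ |g x| := abs_nonneg _
    have hrpos : (0:ℝ) ≤ |g x| ^ p := Real.rpow_nonneg h1 p
    rw [abs_of_nonneg hrpos]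
    rcases eq_or_lt_of_le h1 with h0 | h0
    · rw [← h0, Real.zero_rpow hp0.ne']
      positivity
    · have heq : |g x| ^ p = |g x| ^ (p - 1) * |g x| := by
        rw [← Real.rpow_add_one h0.ne' (p - 1)]
        ring_nf
      rw [heq]
      have hb : |g x| ^ (p - 1) ≤ (M + 1) ^ (p - 1) :=
        Real.rpow_le_rpow h1 (le_trans (hMle x) (by linarith)) (by linarith)
      calc |g x| ^ (p - 1) * |g x| ≤ (M + 1) ^ (p - 1) * |g x| :=
            mul_le_mul_of_nonneg_right hb h1
        _ ≤ abs ((M + 1) ^ (p - 1) * |g x|) := le_abs_self _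
  -- the periodic function
  set h : ℝ → ℝ := fun t => |Real.cos t| ^ p - m with hhdef
  have hhc : Continuous h := hcont0.sub continuous_const
  have hper0 : Function.Periodic (fun t : ℝ => |Real.cos t| ^ p) (2 * π) := by
    intro t
    simp [Real.cos_periodic t]
  have hper : Function.Periodic h (2 * π) := fun t => by
    simp only [hhdef, hper0 t]
  have hint_cos : IntervalIntegrable (fun t : ℝ => |Real.cos t| ^ p) volume 0 (2 * π) :=
    hcont0.intervalIntegrable _ _
  have hmean : ∫ t in (0:ℝ)..(2 * π), h t = 0 := by
    simp only [hhdef]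
    rw [intervalIntegral.integral_sub hint_cos intervalIntegrable_const,
      intervalIntegral.integral_const]
    rw [hm]
    have h2π : (2 * π) ≠ 0 := by positivity
    field_simp
    rw [sub_zero, smul_eq_mul, mul_div_assoc', mul_comm (2 * π), mul_div_assoc, div_self h2π,
      mul_one, sub_self]
  have hcos1 : ∀ t : ℝ, |Real.cos t| ^ p ≤ 1 := fun t =>
    Real.rpow_le_one (abs_nonneg _) (Real.abs_cos_le_one t) hp0.le
  have hB : ∀ t : ℝ, |h t| ≤ 1 + |m| := fun t => by
    simp only [hhdef]
    calc |(|Real.cos t| ^ p - m)| ≤ |(|Real.cos t| ^ p)| + |m| := abs_sub _ _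
      _ ≤ 1 + |m| := by
          have := Real.rpow_nonneg (abs_nonneg (Real.cos t)) p
          rw [abs_of_nonneg this]
          exact add_le_add (hcos1 t) le_rfl
  -- main limit
  have hw := tendsto_weak hhc hper hmean hB hfint
  have hintcos : ∀ lam : ℝ, Integrable (fun x : ℝ => |Real.cos (lam * x)| ^ p * |g x| ^ p) := by
    intro lam
    refine hfint.bdd_mul (c := 1) ?_ (ae_of_all _ fun x => ?_)
    · exact (hcont0.comp (continuous_const.mul continuous_id)).aestronglyMeasurable
    · rw [Real.norm_eq_abs, abs_of_nonneg (Real.rpow_nonneg (abs_nonneg _) p)]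
      exact hcos1 _
  have heq : ∀ lam : ℝ, ∫ x : ℝ, h (lam * x) * |g x| ^ p =
      (∫ x : ℝ, |Real.cos (lam * x)| ^ p * |g x| ^ p) - m * ∫ x : ℝ, |g x| ^ p := by
    intro lam
    have hsplit : (fun x : ℝ => h (lam * x) * |g x| ^ p) =
        fun x => |Real.cos (lam * x)| ^ p * |g x| ^ p - m * |g x| ^ p := by
      funext x
      simp only [hhdef]
      ring
    rw [hsplit, integral_sub (hintcos lam) (hfint.const_mul m), integral_const_mul]
  have hmain : Tendsto (fun lam : ℝ => ∫ x : ℝ, |Real.cos (lam * x)| ^ p * |g x| ^ p)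
      atTop (𝓝 (m * ∫ x : ℝ, |g x| ^ p)) := by
    have h2 : Tendsto (fun lam : ℝ =>
        (∫ x : ℝ, |Real.cos (lam * x)| ^ p * |g x| ^ p) - m * ∫ x : ℝ, |g x| ^ p)
        atTop (𝓝 0) := hw.congr heq
    have h3 := h2.add_const (m * ∫ x : ℝ, |g x| ^ p)
    simpa using h3
  refine ⟨hmain, ?_⟩
  -- positivity of the integral of |g|^p
  set I : ℝ := ∫ x : ℝ, |g x| ^ p with hI
  have hIpos : 0 < I := by
    rw [hI, integral_pos_iff_support_of_nonneg
      (fun x => Real.rpow_nonneg (abs_nonneg _) p) hfint]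
    obtain ⟨x₀, hx₀⟩ : ∃ x₀ : ℝ, g x₀ ≠ 0 := by
      by_contra hcon
      push_neg at hcon
      exact hg (SchwartzMap.ext hcon)
    have hopen : IsOpen (Function.support fun x : ℝ => |g x| ^ p) := by
      rw [Function.support_eq_preimage]
      exact IsOpen.preimage hfcont isOpen_compl_singleton
    have hx₀mem : x₀ ∈ Function.support fun x : ℝ => |g x| ^ p := by
      simp only [Function.mem_support]
      exact ne_of_gt (Real.rpow_pos_of_pos (abs_pos.2 hx₀) p)
    exact hopen.measure_pos volume ⟨x₀, hx₀mem⟩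
  have hmpos : 0 < m := by
    rw [hm]
    refine mul_pos (by positivity) ?_
    rw [intervalIntegral.integral_pos_iff_support_of_nonneg_ae
      (Filter.Eventually.of_forall fun t => Real.rpow_nonneg (abs_nonneg _) p) hint_cos]
    refine ⟨by positivity, ?_⟩
    have hsub2 : Ioo (0:ℝ) (π / 2) ⊆
        Function.support (fun t : ℝ => |Real.cos t| ^ p) ∩ Ioc 0 (2 * π) := by
      intro t ht
      obtain ⟨ht1, ht2⟩ := ht
      constructor
      · simp only [Function.mem_support]
        have hcpos : 0 < Real.cos t := Real.cos_pos_of_mem_Ioo ⟨by linarith, ht2⟩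
        exact ne_of_gt (Real.rpow_pos_of_pos (abs_pos.2 (ne_of_gt hcpos)) p)
      · exact ⟨ht1, by linarith⟩
    calc (0:ℝ≥0∞) < volume (Ioo (0:ℝ) (π / 2)) := by
          rw [Real.volume_Ioo]
          exact ENNReal.ofReal_pos.2 (by linarith)
      _ ≤ _ := measure_mono hsub2
  set c : ℝ := (m / 2) ^ (1 / p) with hc
  have hcpos : 0 < c := Real.rpow_pos_of_pos (by linarith) _
  have hev : ∀ᶠ lam : ℝ in atTop,
      m / 2 * I ≤ ∫ x : ℝ, |Real.cos (lam * x)| ^ p * |g x| ^ p := by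
    have hlt : m / 2 * I < m * I := by nlinarith [mul_pos hmpos hIpos]
    filter_upwards [hmain.eventually (eventually_gt_nhds hlt)] with lam hlam using hlam.le
  obtain ⟨lam₁, hlam₁⟩ := eventually_atTop.1 hev
  refine ⟨c, hcpos, max lam₁ 1, lt_of_lt_of_le one_pos (le_max_right _ _), fun lam hlam => ?_⟩
  have hge := hlam₁ lam (le_trans (le_max_left _ _) hlam)
  set q : ℝ≥0∞ := ENNReal.ofReal p with hq
  have hq0 : q ≠ 0 := by
    simp only [hq, ne_eq, ENNReal.ofReal_eq_zero, not_le]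
    exact hp0
  have hqt : q ≠ ⊤ := ENNReal.ofReal_ne_top
  have hqr : q.toReal = p := ENNReal.toReal_ofReal hp0.le
  have key : ∀ u : ℝ → ℝ, AEStronglyMeasurable u volume →
      Integrable (fun x : ℝ => |u x| ^ p) volume →
      eLpNorm u q volume = (ENNReal.ofReal (∫ x : ℝ, |u x| ^ p)) ^ (1 / p) := by
    intro u hum hui
    rw [MeasureTheory.eLpNorm_eq_lintegral_rpow_enorm_toReal hq0 hqt, hqr]
    congr 1
    rw [ofReal_integral_eq_lintegral_ofReal hui
      (Filter.Eventually.of_forall fun x => Real.rpow_nonneg (abs_nonneg _) p)]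
    refine lintegral_congr fun x => ?_
    rw [Real.enorm_eq_ofReal_abs, ENNReal.ofReal_rpow_of_nonneg (abs_nonneg _) hp0.le]
  have h1 : eLpNorm (⇑g) q volume = (ENNReal.ofReal I) ^ (1 / p) :=
    key _ g.continuous.aestronglyMeasurable hfint
  have habs : (fun x : ℝ => |Real.cos (lam * x) * g x| ^ p) =
      fun x => |Real.cos (lam * x)| ^ p * |g x| ^ p := by
    funext x
    rw [abs_mul, Real.mul_rpow (abs_nonneg _) (abs_nonneg _)]
  have hcos_int : Integrable (fun x : ℝ => |Real.cos (lam * x) * g x| ^ p) volume := by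
    rw [habs]; exact hintcos lam
  have h2 : eLpNorm (fun x : ℝ => Real.cos (lam * x) * g x) q volume =
      (ENNReal.ofReal (∫ x : ℝ, |Real.cos (lam * x) * g x| ^ p)) ^ (1 / p) := by
    refine key _ ?_ hcos_int
    exact ((Real.continuous_cos.comp (continuous_const.mul continuous_id)).mul
      g.continuous).aestronglyMeasurable
  rw [h1, h2]
  have hAI : m / 2 * I ≤ ∫ x : ℝ, |Real.cos (lam * x) * g x| ^ p := by
    rw [habs]; exact hge
  calc ENNReal.ofReal c * (ENNReal.ofReal I) ^ (1 / p)
      = (ENNReal.ofReal (m / 2)) ^ (1 / p) * (ENNReal.ofReal I) ^ (1 / p) := by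
        rw [hc, ← ENNReal.ofReal_rpow_of_nonneg (by linarith) (by positivity)]
    _ = (ENNReal.ofReal (m / 2) * ENNReal.ofReal I) ^ (1 / p) :=
        (ENNReal.mul_rpow_of_nonneg _ _ (by positivity)).symm
    _ = (ENNReal.ofReal (m / 2 * I)) ^ (1 / p) := by
        rw [ENNReal.ofReal_mul (by linarith)]
    _ ≤ (ENNReal.ofReal (∫ x : ℝ, |Real.cos (lam * x) * g x| ^ p)) ^ (1 / p) :=
        ENNReal.rpow_le_rpow (ENNReal.ofReal_le_ofReal hAI) (by positivity)


end
end

section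
/- For every M > 0 there exists n₀ such that for all n ∈ 16ℕ with n ≥ n₀: sup_{x∈ℝ} Σ_{ℓ,m∈N(n), ℓ<m} (1+|x+2^{ℓ+1}γ|)^{−M} (1+|x+2^{m+1}γ|)^{−M} ≤ 2^{−Mn/8}. -/
open MeasureTheory Real Filter Set ENNReal

noncomputable section

/-- smallness of the off-diagonal interactions. -/
theorem statement9 (M : ℝ) (hM : 0 < M) :
    ∃ n₀ : ℕ, ∀ n : ℕ, n₀ ≤ n → 16 ∣ n → ∀ x : ℝ,
      ∑ ℓ ∈ Nset n, ∑ m ∈ (Nset n).filter (fun m => ℓ < m),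
        (1 + |x + 2 ^ (ℓ + 1) * gam|) ^ (-M) * (1 + |x + 2 ^ (m + 1) * gam|) ^ (-M) ≤
        (2:ℝ) ^ (-(M * (n:ℝ)) / 8) := by
  -- eventual polynomial vs exponential bound
  have hb : 0 < M * Real.log 2 / 8 :=
    div_pos (mul_pos hM (Real.log_pos one_lt_two)) (by norm_num)
  set b := M * Real.log 2 / 8 with hbdef
  have hlo := isLittleO_pow_exp_pos_mul_atTop 2 hb
  have hε : (0:ℝ) < (2:ℝ) ^ (-M) * Real.exp (-b) := by positivity
  have hev := hlo.def hε
  rw [eventually_atTop] at hev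
  obtain ⟨X, hX⟩ := hev
  refine ⟨max 4 ⌈X⌉₊, fun n hn _ x => ?_⟩
  have hn4 : 4 ≤ n := le_trans (le_max_left _ _) hn
  have hnX : X ≤ (n:ℝ) + 1 := by
    have : (⌈X⌉₊ : ℝ) ≤ n := Nat.cast_le.mpr (le_trans (le_max_right _ _) hn)
    have := Nat.le_ceil X
    linarith
  -- key : (n+1)^2 ≤ 2^(M*n/8 - M)
  have key : ((n:ℝ) + 1) ^ 2 ≤ (2:ℝ) ^ (M * (n:ℝ) / 8 - M) := by
    have h1 := hX ((n:ℝ) + 1) hnX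
    rw [Real.norm_eq_abs, Real.norm_eq_abs, abs_of_nonneg (by positivity),
      abs_of_nonneg (Real.exp_pos _).le] at h1
    have h2 : Real.exp (-b) * Real.exp (b * ((n:ℝ) + 1)) = Real.exp (b * n) := by
      rw [← Real.exp_add]; ring_nf
    have h3 : Real.exp (b * n) = (2:ℝ) ^ (M * (n:ℝ) / 8) := by
      rw [Real.rpow_def_of_pos two_pos, hbdef]; ring_nf
    calc ((n:ℝ) + 1) ^ 2 ≤ (2:ℝ) ^ (-M) * Real.exp (-b) * Real.exp (b * ((n:ℝ) + 1)) := h1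
      _ = (2:ℝ) ^ (-M) * (2:ℝ) ^ (M * (n:ℝ) / 8) := by rw [mul_assoc, h2, h3]
      _ = (2:ℝ) ^ (M * (n:ℝ) / 8 - M) := by
          rw [← Real.rpow_add two_pos]; ring_nf
  -- the per-term bound
  set c : ℝ := (2:ℝ) ^ ((n:ℝ) / 4 - 1) with hcdef
  have hc1 : (1:ℝ) ≤ c := by
    rw [hcdef]
    calc (1:ℝ) = (2:ℝ) ^ (0:ℝ) := (Real.rpow_zero 2).symm
      _ ≤ (2:ℝ) ^ ((n:ℝ) / 4 - 1) := by
          apply Real.rpow_le_rpow_of_exponent_le one_le_two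
          have : (4:ℝ) ≤ n := by exact_mod_cast hn4
          linarith
  have hterm : ∀ ℓ ∈ Nset n, ∀ m ∈ (Nset n).filter (fun m => ℓ < m),
      (1 + |x + 2 ^ (ℓ + 1) * gam|) ^ (-M) * (1 + |x + 2 ^ (m + 1) * gam|) ^ (-M) ≤
        c ^ (-M) := by
    intro ℓ hℓ m hm
    rw [Finset.mem_filter] at hm
    obtain ⟨hmN, hlm⟩ := hm
    rw [Nset, Finset.mem_filter] at hmN
    obtain ⟨-, -, hm4, -⟩ := hmN
    set a₁ : ℝ := (2:ℝ) ^ (ℓ + 1) * gam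
    set a₂ : ℝ := (2:ℝ) ^ (m + 1) * gam
    have hab : c ≤ |a₁ - a₂| := by
      have h2l : (2:ℝ) ^ (ℓ + 1) ≤ (2:ℝ) ^ m :=
        pow_le_pow_right₀ one_le_two hlm
      have hgap : (2:ℝ) ^ m ≤ (2:ℝ) ^ (m + 1) - (2:ℝ) ^ (ℓ + 1) := by
        have : (2:ℝ) ^ (m + 1) = 2 * (2:ℝ) ^ m := by ring
        linarith
      have hg : gam = 17/24 := by norm_num [gam]
      have hexp : a₂ - a₁ = ((2:ℝ) ^ (m + 1) - 2 ^ (ℓ + 1)) * gam := by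
        simp only [a₁, a₂]; ring
      have hmul : (2:ℝ) ^ m * gam ≤ ((2:ℝ) ^ (m + 1) - 2 ^ (ℓ + 1)) * gam :=
        mul_le_mul_of_nonneg_right hgap (by rw [hg]; norm_num)
      have hppos : (0:ℝ) < (2:ℝ) ^ m := pow_pos two_pos m
      have hpos : 0 ≤ a₂ - a₁ := by rw [hexp, hg] at *; nlinarith
      have habs : |a₁ - a₂| = a₂ - a₁ := by
        rw [abs_sub_comm, abs_of_nonneg hpos]
      rw [habs]
      have hm' : (n:ℝ) / 4 ≤ (m:ℝ) := by
        have : (n:ℝ) ≤ 4 * m := by exact_mod_cast hm4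
        linarith
      have hcle : c ≤ (2:ℝ) ^ m / 2 := by
        rw [hcdef]
        have : (2:ℝ) ^ ((n:ℝ)/4 - 1) ≤ (2:ℝ) ^ ((m:ℝ) - 1) :=
          Real.rpow_le_rpow_of_exponent_le one_le_two (by linarith)
        have heq : (2:ℝ) ^ ((m:ℝ) - 1) = (2:ℝ) ^ m / 2 := by
          rw [Real.rpow_sub two_pos, Real.rpow_one, Real.rpow_natCast]
        linarith [heq ▸ this]
      have : (2:ℝ) ^ m / 2 ≤ a₂ - a₁ := by
        rw [hexp, hg] at *; nlinarith
      linarith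
    -- combine
    rw [← Real.mul_rpow (by positivity) (by positivity)]
    apply Real.rpow_le_rpow_of_nonpos (by linarith) ?_ (by linarith)
    have htri : |a₁ - a₂| ≤ |x + a₁| + |x + a₂| := by
      have : a₁ - a₂ = (x + a₁) - (x + a₂) := by ring
      rw [this]
      exact abs_sub _ _
    nlinarith [abs_nonneg (x + a₁), abs_nonneg (x + a₂)]
  have hD : (0:ℝ) ≤ c ^ (-M) := Real.rpow_nonneg (by positivity) _
  have hcard : ∀ s : Finset ℕ, s ⊆ Finset.range (n + 1) → (s.card : ℝ) ≤ (n:ℝ) + 1 := by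
    intro s hs
    have := Finset.card_le_card hs
    rw [Finset.card_range] at this
    exact_mod_cast this
  have hNsub : Nset n ⊆ Finset.range (n + 1) := Finset.filter_subset _ _
  have hsum : ∑ ℓ ∈ Nset n, ∑ m ∈ (Nset n).filter (fun m => ℓ < m),
      (1 + |x + 2 ^ (ℓ + 1) * gam|) ^ (-M) * (1 + |x + 2 ^ (m + 1) * gam|) ^ (-M) ≤
      ((n:ℝ) + 1) * (((n:ℝ) + 1) * c ^ (-M)) := by
    calc ∑ ℓ ∈ Nset n, ∑ m ∈ (Nset n).filter (fun m => ℓ < m),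
        (1 + |x + 2 ^ (ℓ + 1) * gam|) ^ (-M) * (1 + |x + 2 ^ (m + 1) * gam|) ^ (-M)
        ≤ ∑ ℓ ∈ Nset n, (((n:ℝ) + 1) * c ^ (-M)) := by
          apply Finset.sum_le_sum
          intro ℓ hℓ
          calc ∑ m ∈ (Nset n).filter (fun m => ℓ < m),
              (1 + |x + 2 ^ (ℓ + 1) * gam|) ^ (-M) * (1 + |x + 2 ^ (m + 1) * gam|) ^ (-M)
              ≤ ∑ _m ∈ (Nset n).filter (fun m => ℓ < m), c ^ (-M) :=
                Finset.sum_le_sum (fun m hm => hterm ℓ hℓ m hm)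
            _ = (((Nset n).filter (fun m => ℓ < m)).card : ℝ) * c ^ (-M) := by
                rw [Finset.sum_const, nsmul_eq_mul]
            _ ≤ ((n:ℝ) + 1) * c ^ (-M) := by
                apply mul_le_mul_of_nonneg_right _ hD
                exact hcard _ ((Finset.filter_subset _ _).trans hNsub)
      _ = ((Nset n).card : ℝ) * (((n:ℝ) + 1) * c ^ (-M)) := by
          rw [Finset.sum_const, nsmul_eq_mul]
      _ ≤ ((n:ℝ) + 1) * (((n:ℝ) + 1) * c ^ (-M)) := by
          apply mul_le_mul_of_nonneg_right (hcard _ hNsub)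
          positivity
  refine hsum.trans ?_
  have hceq : c ^ (-M) = (2:ℝ) ^ (((n:ℝ)/4 - 1) * (-M)) := by
    rw [hcdef, ← Real.rpow_mul (by norm_num)]
  calc ((n:ℝ) + 1) * (((n:ℝ) + 1) * c ^ (-M)) = ((n:ℝ) + 1) ^ 2 * c ^ (-M) := by ring
    _ ≤ (2:ℝ) ^ (M * (n:ℝ) / 8 - M) * c ^ (-M) :=
        mul_le_mul_of_nonneg_right key hD
    _ = (2:ℝ) ^ ((M * (n:ℝ) / 8 - M) + ((n:ℝ)/4 - 1) * (-M)) := by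
        rw [hceq, ← Real.rpow_add two_pos]
    _ = (2:ℝ) ^ (-(M * (n:ℝ)) / 8) := by ring_nf

end
end
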